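/- Let T be a tree of order n ≥ 2. Then for every positive integer k ≤ n, β_S^k(T) ≥ n − k − 1. -/

import Mathlib

open Finset

variable {V : Type*}

/-- Sum of `f` over all edges of `G`. -/
noncomputable def edgeSum (G : SimpleGraph V) (f : Sym2 V → ℤ) : ℤ :=
  ∑ᶠ e ∈ G.edgeSet, f e

/-- Sum of `f` over all edges of `G` incident with `v`, i.e. `f(E_G(v))`. -/
noncomputable def vertexSum (G : SimpleGraph V) (f : Sym2 V → ℤ) (v : V) : ℤ :=
  ∑ᶠ e ∈ {e ∈ G.edgeSet | v ∈ e}, f e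

/-- `f` is a signed `k`-submatching of `G`: it takes values `±1` on edges and
`f(E_G(v)) ≤ 1` for at least `k` vertices. -/
def IsSignedSubmatching (G : SimpleGraph V) (f : Sym2 V → ℤ) (k : ℕ) : Prop :=
  (∀ e ∈ G.edgeSet, f e = 1 ∨ f e = -1) ∧ k ≤ {v | vertexSum G f v ≤ 1}.ncard

/-- The signed `k`-submatching number `β_S^k(G)`. -/
noncomputable def betaS (G : SimpleGraph V) (k : ℕ) : ℤ :=
  sSup {s : ℤ | ∃ f, IsSignedSubmatching G f k ∧ s = edgeSum G f}

/-!
Root the tree at `r` and let `p v` be the neighbour of `v ≠ r` closer to `r`, so that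
`v ↦ s(v, p v)` enumerates the edges. Process the vertices farthest from `r` first. When `a` is
processed, the edges to its children are signed already and its parent edge is still positive;
flipping half of the positive edges at `a`, the parent edge first, gives `f(E(a)) ≤ 1`. The
potential `2 · #(negative edges) + #(positive edges from processed to unprocessed vertices)` grows
by at most one per step, so after `k` steps the `k` processed vertices satisfy `f(E(v)) ≤ 1` and
at most `k / 2` of the `n - 1` edges are negative.
-/

namespace ParentMap

/- A rooted forest is given by the set `N` of non-root vertices and the parent map `p`, its edges
being `s(c, p c)` for `c ∈ N`; a signing is given by the set `M ⊆ N` of the lower ends of its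
negative edges. -/

variable {α : Type*} [DecidableEq α] (N : Finset α) (p : α → α)

def star (v : α) : Finset α := N.filter fun c => v ∈ s(c, p c)

def boundary (D M : Finset α) : Finset α := (N.filter fun c => c ∈ D ∧ p c ∉ D) \ M

/-- Signing the edges of `M` by `-1` and the others by `1`, the edges at `v` sum to at most `1`. -/
def IsBalancedAt (M : Finset α) (v : α) : Prop := #(star N p v \ M) ≤ #(star N p v ∩ M) + 1

variable {N p}

@[simp]
lemma mem_star {v c : α} : c ∈ star N p v ↔ c ∈ N ∧ (v = c ∨ v = p c) := by
  simp [star, Sym2.mem_iff]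

lemma IsBalancedAt.mono {M M' : Finset α} {v : α} (h : IsBalancedAt N p M v) (hM : M ⊆ M') :
    IsBalancedAt N p M' v := by
  have h₁ := card_le_card (sdiff_subset_sdiff (subset_refl (star N p v)) hM)
  have h₂ := card_le_card (inter_subset_inter_left (s := star N p v) hM)
  unfold IsBalancedAt at *
  omega

lemma injOn_edge (depth : α → ℕ) (hp : ∀ c ∈ N, depth (p c) < depth c) :
    Set.InjOn (fun c => s(c, p c)) N := by
  intro c hc c' hc' h
  rcases Sym2.eq_iff.1 h with ⟨h, -⟩ | ⟨h, h'⟩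
  · exact h
  · have h₁ := hp c hc
    have h₂ := hp c' hc'
    rw [h'] at h₁
    rw [← h] at h₂
    omega

/- `F` is half of `P`, containing `a` unless `#P ≤ 1`; the second inequality is the form in which
this keeps the potential from growing by more than one. -/
lemma exists_half_subset (P : Finset α) (a : α) :
    ∃ F ⊆ P, #P ≤ 2 * #F + 1 ∧ 2 * #F + #((P \ F) ∩ {a}) ≤ #(P.erase a) + 1 := by
  by_cases h : a ∈ P ∧ 2 ≤ #P
  · obtain ⟨F, haF, hFP, hF⟩ := exists_subsuperset_card_eq (singleton_subset_iff.2 h.1)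
      (n := #P / 2) (by simp; omega) (Nat.div_le_self _ _)
    have haPF : a ∉ P \ F := fun h' => (mem_sdiff.1 h').2 (singleton_subset_iff.1 haF)
    have := card_erase_add_one h.1
    refine ⟨F, hFP, by omega, ?_⟩
    rw [inter_singleton_of_notMem haPF, card_empty]
    omega
  · obtain ⟨F, hFP, hF⟩ := exists_subset_card_eq (Nat.div_le_self #P 2)
    refine ⟨F, hFP, by omega, ?_⟩
    by_cases ha : a ∈ P
    · have := (card_le_card (inter_subset_right (s₁ := P \ F))).trans (card_singleton a).le
      have := card_erase_add_one ha
      have : #P < 2 := by by_contra; exact h ⟨ha, by omega⟩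
      omega
    · rw [inter_singleton_of_notMem fun h => ha (mem_sdiff.1 h).1, erase_eq_of_notMem ha,
        card_empty]
      omega

lemma boundary_insert_subset (D M F : Finset α) (a : α) :
    boundary N p (insert a D) (M ∪ F) ⊆
      (boundary N p D M \ star N p a) ∪ (((star N p a \ M) \ F) ∩ {a}) := by
  intro c hc
  simp only [boundary, mem_sdiff, mem_filter, mem_insert, mem_union, mem_star, mem_inter,
    mem_singleton] at hc ⊢
  grind

lemma erase_subset_boundary {D M : Finset α} {a : α} (ha : a ∉ D)
    (hch : ∀ c ∈ N, p c = a → c ∈ D) : (star N p a \ M).erase a ⊆ boundary N p D M := by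
  intro c hc
  simp only [mem_erase, mem_sdiff, mem_star, boundary, mem_filter] at hc ⊢
  obtain ⟨hca, ⟨hcN, rfl | rfl⟩, hcM⟩ := hc
  · exact absurd rfl hca
  · exact ⟨⟨hcN, hch c hcN rfl, ha⟩, hcM⟩

lemma exists_balanced_insert {D M : Finset α} {a : α} (ha : a ∉ D)
    (hch : ∀ c ∈ N, p c = a → c ∈ D) (hMD : M ⊆ D) (hMN : M ⊆ N)
    (hbal : ∀ v ∈ D, IsBalancedAt N p M v) (hpot : 2 * #M + #(boundary N p D M) ≤ #D) :
    ∃ M', M' ⊆ insert a D ∧ M' ⊆ N ∧ (∀ v ∈ insert a D, IsBalancedAt N p M' v) ∧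
      2 * #M' + #(boundary N p (insert a D) M') ≤ #D + 1 := by
  set P := star N p a \ M
  obtain ⟨F, hFP, hhalf, hflip⟩ := exists_half_subset P a
  have hFstar : F ⊆ star N p a := hFP.trans sdiff_subset
  have hstar : star N p a ⊆ insert a D := by
    intro c hc
    obtain ⟨hcN, rfl | rfl⟩ := mem_star.1 hc
    · exact mem_insert_self _ _
    · exact mem_insert_of_mem (hch c hcN rfl)
  refine ⟨M ∪ F, union_subset (hMD.trans (subset_insert _ _)) (hFstar.trans hstar),
    union_subset hMN (hFstar.trans (filter_subset _ _)), fun v hv => ?_, ?_⟩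
  · rcases mem_insert.1 hv with rfl | hv
    · have hpos : star N p v \ (M ∪ F) = P \ F := (sdiff_sdiff_left ..).symm
      have hneg := card_le_card (subset_inter hFstar (subset_union_right (s₁ := M)))
      unfold IsBalancedAt
      rw [hpos, card_sdiff_of_subset hFP]
      omega
    · exact (hbal v hv).mono subset_union_left
  · have hsub : P.erase a ⊆ boundary N p D M := erase_subset_boundary ha hch
    have h₁ : #(boundary N p (insert a D) (M ∪ F)) ≤
        #((boundary N p D M \ star N p a) ∪ ((P \ F) ∩ {a})) :=
      card_le_card (boundary_insert_subset D M F a)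
    have h₂ := card_union_le (boundary N p D M \ star N p a) ((P \ F) ∩ {a})
    have h₃ : #(boundary N p D M \ star N p a) ≤ #(boundary N p D M) - #(P.erase a) := by
      rw [← card_sdiff_of_subset hsub]
      exact card_le_card (sdiff_subset_sdiff subset_rfl ((erase_subset _ _).trans sdiff_subset))
    have h₄ := card_le_card hsub
    have h₅ := card_union_le M F
    omega

theorem exists_balanced [Fintype α] (depth : α → ℕ) (hp : ∀ c ∈ N, depth (p c) < depth c)
    {k : ℕ} (hk : k ≤ Fintype.card α) :
    ∃ D M : Finset α, #D = k ∧ M ⊆ D ∧ M ⊆ N ∧ (∀ v ∈ D, IsBalancedAt N p M v) ∧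
      2 * #M + #(boundary N p D M) ≤ k := by
  induction k with
  | zero => exact ⟨∅, ∅, rfl, subset_rfl, empty_subset _, by simp, by simp [boundary]⟩
  | succ k ih =>
    obtain ⟨D, M, rfl, hMD, hMN, hbal, hpot⟩ := ih (by omega)
    have hne : Dᶜ.Nonempty := by
      rw [← card_pos, card_compl]
      omega
    obtain ⟨a, haD, hmax⟩ := exists_max_image Dᶜ depth hne
    have hch : ∀ c ∈ N, p c = a → c ∈ D := fun c hc hca => by
      by_contra h
      have h₁ := hmax c (mem_compl.2 h)
      have h₂ := hp c hc
      rw [hca] at h₂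
      omega
    obtain ⟨M', h⟩ := exists_balanced_insert (mem_compl.1 haD) hch hMD hMN hbal hpot
    exact ⟨insert a D, M', card_insert_of_notMem (mem_compl.1 haD), h⟩

end ParentMap

section EdgeEnumeration

variable [DecidableEq V] {ι : Type*} {G : SimpleGraph V} {N : Finset ι} {e : ι → Sym2 V}

def signing [DecidableEq ι] (e : ι → Sym2 V) (M : Finset ι) (x : Sym2 V) : ℤ :=
  if x ∈ M.image e then -1 else 1

lemma sum_signing [DecidableEq ι] {M S : Finset ι} (he : Set.InjOn e N) (hM : M ⊆ N)
    (hS : S ⊆ N) :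
    ∑ c ∈ S, signing e M (e c) = #(S \ M) - #(S ∩ M) := by
  have : ∀ c ∈ S, signing e M (e c) = if c ∈ M then -1 else 1 := fun c hc => by
    simp only [signing, mem_image]
    congr 1
    exact propext ⟨fun ⟨m, hm, h⟩ => he (hM hm) (hS hc) h ▸ hm, fun h => ⟨c, h, rfl⟩⟩
  rw [sum_congr rfl this, sum_ite, filter_mem_eq_inter, filter_notMem_eq_sdiff]
  simp only [sum_const, nsmul_eq_mul, mul_neg, mul_one]
  ring

lemma edgeSum_eq_sum (hN : (N.image e : Set (Sym2 V)) = G.edgeSet) (he : Set.InjOn e N)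
    (f : Sym2 V → ℤ) : edgeSum G f = ∑ c ∈ N, f (e c) := by
  rw [edgeSum, ← hN, finsum_mem_coe_finset, sum_image he]

lemma vertexSum_eq_sum (hN : (N.image e : Set (Sym2 V)) = G.edgeSet) (he : Set.InjOn e N)
    (f : Sym2 V → ℤ) (v : V) : vertexSum G f v = ∑ c ∈ N with v ∈ e c, f (e c) := by
  have : {x ∈ G.edgeSet | v ∈ x} = ↑((N.filter (v ∈ e ·)).image e) := by
    ext x
    rw [← hN]
    simp only [Set.mem_ofPred_eq, coe_image, Set.mem_image, mem_coe, coe_filter]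
    constructor
    · rintro ⟨⟨c, hc, rfl⟩, hv⟩
      exact ⟨c, ⟨hc, hv⟩, rfl⟩
    · rintro ⟨c, ⟨hc, hv⟩, rfl⟩
      exact ⟨⟨c, hc, rfl⟩, hv⟩
  rw [vertexSum, this, finsum_mem_coe_finset,
    sum_image (he.mono (coe_subset.2 (filter_subset _ _)))]

end EdgeEnumeration

lemma isSignedSubmatching_signing [Finite V] [DecidableEq V] {G : SimpleGraph V} {p : V → V}
    {N D M : Finset V} (hN : (N.image (fun c => s(c, p c)) : Set (Sym2 V)) = G.edgeSet)
    (he : Set.InjOn (fun c => s(c, p c)) N) (hMN : M ⊆ N)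
    (hbal : ∀ v ∈ D, ParentMap.IsBalancedAt N p M v) :
    IsSignedSubmatching G (signing (fun c => s(c, p c)) M) #D := by
  refine ⟨fun x _ => by unfold signing; split_ifs <;> simp, ?_⟩
  calc #D = (D : Set V).ncard := (Set.ncard_coe_finset D).symm
    _ ≤ _ := Set.ncard_le_ncard (fun v hv => ?_) (Set.toFinite _)
  have := hbal v hv
  rw [Set.mem_ofPred_eq, vertexSum_eq_sum hN he, sum_signing he hMN (filter_subset _ _)]
  unfold ParentMap.IsBalancedAt ParentMap.star at this
  omega

lemma IsSignedSubmatching.edgeSum_le_betaS [Fintype V] {G : SimpleGraph V} {f : Sym2 V → ℤ}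
    {k : ℕ} (hf : IsSignedSubmatching G f k) : edgeSum G f ≤ betaS G k := by
  classical
  refine le_csSup ⟨#G.edgeFinset, ?_⟩ ⟨f, hf, rfl⟩
  rintro _ ⟨g, hg, rfl⟩
  rw [edgeSum, ← SimpleGraph.coe_edgeFinset, finsum_mem_coe_finset]
  calc ∑ e ∈ G.edgeFinset, g e ≤ ∑ _e ∈ G.edgeFinset, 1 :=
        sum_le_sum fun e he => by
          rcases hg.1 e (SimpleGraph.mem_edgeFinset.1 he) with h | h <;> omega
    _ = #G.edgeFinset := by simp

namespace SimpleGraph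

lemma Connected.exists_adj_dist_lt {G : SimpleGraph V} (hG : G.Connected) {v r : V}
    (hv : v ≠ r) : ∃ w, G.Adj v w ∧ G.dist w r < G.dist v r := by
  obtain ⟨q, hq⟩ := hG.exists_walk_length_eq_dist v r
  cases q with
  | nil => exact absurd rfl hv
  | cons h q =>
    have := dist_le q
    rw [Walk.length_cons] at hq
    exact ⟨_, h, by omega⟩

lemma IsTree.image_parentEdge_eq_edgeFinset [Fintype V] [DecidableEq V] {G : SimpleGraph V}
    [DecidableRel G.Adj] (hT : G.IsTree) {r : V} {p : V → V} (hadj : ∀ v ≠ r, G.Adj v (p v))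
    (he : Set.InjOn (fun c => s(c, p c)) (univ.erase r)) :
    (univ.erase r).image (fun c => s(c, p c)) = G.edgeFinset := by
  refine eq_of_subset_of_card_le (fun x hx => ?_) ?_
  · obtain ⟨c, hc, rfl⟩ := mem_image.1 hx
    exact mem_edgeFinset.2 (hadj c (ne_of_mem_erase hc))
  · rw [card_image_of_injOn he, card_erase_of_mem (mem_univ r), card_univ, ← hT.card_edgeFinset]
    simp

end SimpleGraph

theorem tree_betaS_lower_bound_general [Fintype V] (G : SimpleGraph V) (hT : G.IsTree)
    (k : ℕ) (hk : k ≤ Fintype.card V) :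
    (Fintype.card V : ℤ) - k - 1 ≤ betaS G k := by
  classical
  obtain ⟨r⟩ := hT.connected.nonempty
  choose! p hadj hdist using fun v (hv : v ≠ r) => hT.connected.exists_adj_dist_lt hv
  set N := univ.erase r
  have hdepth : ∀ c ∈ N, G.dist (p c) r < G.dist c r :=
    fun c hc => hdist c (ne_of_mem_erase hc)
  have he := ParentMap.injOn_edge (G.dist · r) hdepth
  have hN : (N.image (fun c => s(c, p c)) : Set (Sym2 V)) = G.edgeSet := by
    rw [hT.image_parentEdge_eq_edgeFinset hadj he, SimpleGraph.coe_edgeFinset]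
  obtain ⟨D, M, rfl, -, hMN, hbal, hpot⟩ := ParentMap.exists_balanced (G.dist · r) hdepth hk
  calc (Fintype.card V : ℤ) - #D - 1 ≤ edgeSum G (signing (fun c => s(c, p c)) M) := by
        rw [edgeSum_eq_sum hN he, sum_signing he hMN subset_rfl, inter_eq_right.2 hMN,
          card_sdiff_of_subset hMN, card_erase_of_mem (mem_univ r), card_univ]
        have := card_le_card hMN
        omega
    _ ≤ betaS G #D := (isSignedSubmatching_signing hN he hMN hbal).edgeSum_le_betaS

theorem tree_betaS_lower_bound [Fintype V] (G : SimpleGraph V) (hT : G.IsTree)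
    (hn : 2 ≤ Fintype.card V) (k : ℕ) (hk1 : 1 ≤ k) (hk : k ≤ Fintype.card V) :
    (Fintype.card V : ℤ) - k - 1 ≤ betaS G k :=
  tree_betaS_lower_bound_general G hT k hk
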